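/- arXiv:2404.15199 — 2 statements merged into one kernel-verified Lean document; each statement's English description precedes it below -/
import Mathlib

section
/- Value deviation bound: under the setup of the vectorized Bellman equations, if ‖r_β − r_reg‖₁ ≤ |S|·L_R·(1−β)·Δa, each row difference satisfies ‖(p_{β,s} − p_{reg,s})‖₁ ≤ L_P·(1−β)·Δa, and ‖v_reg‖_∞ ≤ R_max/(1−γ), then for every state s: |v_β(s) − v_reg(s)| ≤ ((1−γ)|S|·L_R + γ|S|·L_P·R_max)·(1−β)·Δa / (1−γ)². -/
open Matrix

/-- Value deviation bound: under the vectorized Bellman setup, with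
`‖r_β − r_reg‖₁ ≤ |S| L_R (1−β) Δa`, row-wise `‖p_{β,s} − p_{reg,s}‖₁ ≤ L_P (1−β) Δa`, and
`‖v_reg‖_∞ ≤ R_max/(1−γ)`, every state `s` satisfies
`|v_β(s) − v_reg(s)| ≤ ((1−γ)|S| L_R + γ|S| L_P R_max)(1−β)Δa/(1−γ)²`. -/
theorem stmt8 {S : Type*} [Fintype S] (Pb Pr : Matrix S S ℝ)
    (hPb0 : ∀ s s', 0 ≤ Pb s s') (hPb1 : ∀ s, ∑ s', Pb s s' = 1)
    (hPr0 : ∀ s s', 0 ≤ Pr s s') (hPr1 : ∀ s, ∑ s', Pr s s' = 1)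
    (γ : ℝ) (hγ : γ ∈ Set.Ioo (0:ℝ) 1)
    (rb rr vb vr : S → ℝ)
    (hvb : vb = rb + γ • Pb.mulVec vb)
    (hvr : vr = rr + γ • Pr.mulVec vr)
    (LR LP : ℝ) (hLR : 0 < LR) (hLP : 0 < LP)
    (β : ℝ) (hβ : β ∈ Set.Icc (0:ℝ) 1) (Δa : ℝ) (hΔa : 0 ≤ Δa)
    (Rmax : ℝ)
    (hr1 : ∑ s, |rb s - rr s| ≤ (Fintype.card S : ℝ) * LR * (1 - β) * Δa)
    (hP1 : ∀ s, ∑ s', |Pb s s' - Pr s s'| ≤ LP * (1 - β) * Δa)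
    (hvrInf : ∀ s, |vr s| ≤ Rmax / (1 - γ)) :
    ∀ s, |vb s - vr s| ≤
      ((1 - γ) * (Fintype.card S : ℝ) * LR + γ * (Fintype.card S : ℝ) * LP * Rmax) *
        (1 - β) * Δa / (1 - γ) ^ 2 := by
  intro s
  have hγ0 := hγ.1
  have hγ1 := hγ.2
  have h1γ : 0 < 1 - γ := by linarith
  have hM0 : 0 ≤ Rmax / (1 - γ) := le_trans (abs_nonneg _) (hvrInf s)
  have hRmax0 : 0 ≤ Rmax := by
    by_contra h
    push_neg at h
    have : Rmax / (1 - γ) < 0 := div_neg_of_neg_of_pos h h1γ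
    linarith
  have hcard : (1:ℝ) ≤ (Fintype.card S : ℝ) := by
    have : 0 < Fintype.card S := Fintype.card_pos_iff.mpr ⟨s⟩
    exact_mod_cast this
  obtain ⟨s0, -, hs0⟩ := Finset.exists_max_image Finset.univ
    (fun t => |vb t - vr t|) ⟨s, Finset.mem_univ s⟩
  set D := |vb s0 - vr s0| with hD
  have hDs : |vb s - vr s| ≤ D := hs0 s (Finset.mem_univ s)
  have hb := congrFun hvb s0
  have hrr := congrFun hvr s0
  simp only [Pi.add_apply, Pi.smul_apply, smul_eq_mul, Matrix.mulVec, dotProduct] at hb hrr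
  have hsum : ∑ s', Pb s0 s' * (vb s' - vr s') + ∑ s', (Pb s0 s' - Pr s0 s') * vr s'
      = ∑ s', Pb s0 s' * vb s' - ∑ s', Pr s0 s' * vr s' := by
    rw [← Finset.sum_add_distrib, ← Finset.sum_sub_distrib]
    exact Finset.sum_congr rfl fun i _ => by ring
  have hid : vb s0 - vr s0 = (rb s0 - rr s0)
      + γ * (∑ s', Pb s0 s' * (vb s' - vr s'))
      + γ * (∑ s', (Pb s0 s' - Pr s0 s') * vr s') := by
    rw [hb, hrr]
    linear_combination (-γ) * hsum
  have hA : |rb s0 - rr s0| ≤ (Fintype.card S : ℝ) * LR * (1 - β) * Δa :=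
    le_trans (Finset.single_le_sum (f := fun i => |rb i - rr i|) (fun i _ => abs_nonneg _) (Finset.mem_univ s0)) hr1
  have hB : |∑ s', Pb s0 s' * (vb s' - vr s')| ≤ D := by
    calc |∑ s', Pb s0 s' * (vb s' - vr s')| ≤ ∑ s', |Pb s0 s' * (vb s' - vr s')| :=
          Finset.abs_sum_le_sum_abs _ _
      _ ≤ ∑ s', Pb s0 s' * D := by
          apply Finset.sum_le_sum
          intro i _
          rw [abs_mul, abs_of_nonneg (hPb0 s0 i)]
          exact mul_le_mul_of_nonneg_left (hs0 i (Finset.mem_univ i)) (hPb0 s0 i)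
      _ = D := by rw [← Finset.sum_mul, hPb1, one_mul]
  have hC : |∑ s', (Pb s0 s' - Pr s0 s') * vr s'| ≤ LP * (1 - β) * Δa * (Rmax / (1 - γ)) := by
    calc |∑ s', (Pb s0 s' - Pr s0 s') * vr s'| ≤ ∑ s', |(Pb s0 s' - Pr s0 s') * vr s'| :=
          Finset.abs_sum_le_sum_abs _ _
      _ ≤ ∑ s', |Pb s0 s' - Pr s0 s'| * (Rmax / (1 - γ)) := by
          apply Finset.sum_le_sum
          intro i _
          rw [abs_mul]
          exact mul_le_mul_of_nonneg_left (hvrInf i) (abs_nonneg _)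
      _ = (∑ s', |Pb s0 s' - Pr s0 s'|) * (Rmax / (1 - γ)) := by rw [Finset.sum_mul]
      _ ≤ LP * (1 - β) * Δa * (Rmax / (1 - γ)) :=
          mul_le_mul_of_nonneg_right (hP1 s0) hM0
  have hDle : D ≤ (Fintype.card S : ℝ) * LR * (1 - β) * Δa + γ * D
      + γ * (LP * (1 - β) * Δa * (Rmax / (1 - γ))) := by
    calc D = |(rb s0 - rr s0) + γ * (∑ s', Pb s0 s' * (vb s' - vr s'))
          + γ * (∑ s', (Pb s0 s' - Pr s0 s') * vr s')| := by rw [hD, hid]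
      _ ≤ |rb s0 - rr s0| + |γ * (∑ s', Pb s0 s' * (vb s' - vr s'))|
          + |γ * (∑ s', (Pb s0 s' - Pr s0 s') * vr s')| := abs_add_three _ _ _
      _ ≤ (Fintype.card S : ℝ) * LR * (1 - β) * Δa + γ * D
          + γ * (LP * (1 - β) * Δa * (Rmax / (1 - γ)))  := by
          rw [abs_mul, abs_mul, abs_of_pos hγ0]
          gcongr
  have hD0 : 0 ≤ D := abs_nonneg _
  have hβ1 : 0 ≤ 1 - β := by linarith [hβ.2]
  have key : γ * (LP * (1 - β) * Δa * (Rmax / (1 - γ))) * (1 - γ)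
      = γ * (LP * (1 - β) * Δa * Rmax) := by
    field_simp
  refine le_trans hDs ?_
  rw [le_div_iff₀ (by positivity)]
  nlinarith [mul_le_mul_of_nonneg_right hDle h1γ.le,
    mul_le_mul_of_nonneg_right hA h1γ.le,
    mul_nonneg (mul_nonneg (mul_nonneg hγ0.le (mul_nonneg hLP.le hβ1)) hΔa) hRmax0,
    mul_le_mul_of_nonneg_right hcard
      (mul_nonneg (mul_nonneg (mul_nonneg hγ0.le (mul_nonneg hLP.le hβ1)) hΔa) hRmax0)]
end

section
/- Performance difference consequence: in a finite discounted MDP, if policy π' satisfies the nonnegative-advantage condition A^π(s, π') = Q^π(s, π'(s)) − Q^π(s, π(s)) ≥ 0 for every state s, then V^{π'}(s) ≥ V^π(s) for every state s. -/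
/-- Performance difference consequence: in a finite discounted MDP, if `π'` has
nonnegative advantage `Q^π(s, π'(s)) − Q^π(s, π(s)) ≥ 0` at every state, then
`V^{π'}(s) ≥ V^π(s)` at every state. -/
theorem stmt9 {S A : Type*} [Fintype S]
    (P : S → A → S → ℝ) (r : S → A → ℝ)
    (hP0 : ∀ s a s', 0 ≤ P s a s') (hP1 : ∀ s a, ∑ s', P s a s' = 1)
    (γ : ℝ) (hγ : γ ∈ Set.Ioo (0:ℝ) 1)
    (pi pi' : S → A) (V V' : S → ℝ)
    (hV : ∀ s, V s = r s (pi s) + γ * ∑ s', P s (pi s) s' * V s')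
    (hV' : ∀ s, V' s = r s (pi' s) + γ * ∑ s', P s (pi' s) s' * V' s')
    (Q : S → A → ℝ)
    (hQ : ∀ s a, Q s a = r s a + γ * ∑ s', P s a s' * V s')
    (hadv : ∀ s, 0 ≤ Q s (pi' s) - Q s (pi s)) :
    ∀ s, V s ≤ V' s := by
  obtain ⟨hγ0, hγ1⟩ := hγ
  -- key pointwise inequality: V s - V' s ≤ γ * ∑ P s (π' s) s' * (V s' - V' s')
  have hkey : ∀ s, V s - V' s ≤ γ * ∑ s', P s (pi' s) s' * (V s' - V' s') := by
    intro s
    have h1 : V s ≤ r s (pi' s) + γ * ∑ s', P s (pi' s) s' * V s' := by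
      have hVs : V s = Q s (pi s) := by rw [hQ, hV]
      have := hadv s
      have h2 : Q s (pi s) ≤ Q s (pi' s) := by linarith
      rw [hVs]
      calc Q s (pi s) ≤ Q s (pi' s) := h2
        _ = r s (pi' s) + γ * ∑ s', P s (pi' s) s' * V s' := hQ s (pi' s)
    have h3 : V s - V' s ≤ γ * ∑ s', P s (pi' s) s' * V s'
        - γ * ∑ s', P s (pi' s) s' * V' s' := by
      rw [hV' s] at *; linarith
    calc V s - V' s ≤ _ := h3
      _ = γ * ∑ s', P s (pi' s) s' * (V s' - V' s') := by
        rw [← mul_sub, ← Finset.sum_sub_distrib]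
        congr 1; apply Finset.sum_congr rfl; intro x _; ring
  rcases isEmpty_or_nonempty S with hS | hS
  · intro s; exact (hS.false s).elim
  · -- pick a maximizer of V - V'
    obtain ⟨s₀, -, hs₀⟩ := Finset.exists_max_image Finset.univ (fun s => V s - V' s)
      ⟨Classical.arbitrary S, Finset.mem_univ _⟩
    have hmax : ∀ s, V s - V' s ≤ V s₀ - V' s₀ := fun s => hs₀ s (Finset.mem_univ s)
    have hsum : ∑ s', P s₀ (pi' s₀) s' * (V s' - V' s')
        ≤ ∑ s', P s₀ (pi' s₀) s' * (V s₀ - V' s₀) := by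
      apply Finset.sum_le_sum
      intro i _
      exact mul_le_mul_of_nonneg_left (hmax i) (hP0 _ _ _)
    have hsum2 : ∑ s', P s₀ (pi' s₀) s' * (V s₀ - V' s₀) = V s₀ - V' s₀ := by
      rw [← Finset.sum_mul, hP1, one_mul]
    have h4 : V s₀ - V' s₀ ≤ γ * (V s₀ - V' s₀) := by
      calc V s₀ - V' s₀ ≤ γ * ∑ s', P s₀ (pi' s₀) s' * (V s' - V' s') := hkey s₀
        _ ≤ γ * (V s₀ - V' s₀) := by
          rw [← hsum2]; exact mul_le_mul_of_nonneg_left hsum (le_of_lt hγ0)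
    have h5 : V s₀ - V' s₀ ≤ 0 := by nlinarith
    intro s
    have := hmax s
    linarith
end
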